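/- Let x > 0, let k and d be positive integers, let T be a finite set of stations in ℝ² containing at most k stations in each box of the grid G_x, let N be a positive integer, let ℓ : T → {1,…,N} be an injective labeling, and let F be an (N,c)-strongly selective family for some integer c with k·(2d+1)² ≤ c ≤ N. Then for every station u ∈ T there exists a set A ∈ F such that ℓ(u) ∈ A and ℓ(w) ∉ A for every station w ∈ T with w ≠ u whose box is at box-distance strictly less than d from the box of u (including stations sharing u's box). That is, in some round of the execution of the (N,c)-ssf schedule, u transmits while all other stations in its box and in all boxes at box-distance less than d from its box are silent. -/

import Mathlib

/-!
The stations at box-distance less than `d` from the box of `u` all lie in the `(2d+1) × (2d+1)`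
square of boxes centred at it, so there are at most `k(2d+1)² ≤ c` of them. Their labels form a
set of at most `c` elements of `{1,…,N}` containing `ℓ u`, and the ssf property applied to this
set yields a round in which `u` is the only one of them that transmits.
-/

noncomputable section
open scoped Classical

abbrev Pt := EuclideanSpace ℝ (Fin 2)

/-- The grid coordinates of the box of the grid `G_x` containing a point `p`:
the box with coordinates `(a,b)` is `[a·x,(a+1)·x) × [b·x,(b+1)·x)`. -/
def gridCoord (x : ℝ) (p : Pt) : ℤ × ℤ := (⌊p 0 / x⌋, ⌊p 1 / x⌋)

def boxDist (c₁ c₂ : ℤ × ℤ) : ℕ :=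
  (max |c₁.1 - c₂.1| |c₁.2 - c₂.2| - 1).toNat

def IsSSF (N c : ℕ) (F : Finset (Finset ℕ)) : Prop :=
  (∀ A ∈ F, A ⊆ Finset.Icc 1 N) ∧
  ∀ S : Finset ℕ, S ⊆ Finset.Icc 1 N → S.Nonempty → S.card ≤ c →
    ∀ y ∈ S, ∃ A ∈ F, S ∩ A = {y}

open Finset

theorem Finset.card_filter_mem_le_mul_card {α β : Type*} [DecidableEq β] {f : α → β}
    {s : Finset α} {k : ℕ} (hk : ∀ b, #{a ∈ s | f a = b} ≤ k) (t : Finset β) :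
    #{a ∈ s | f a ∈ t} ≤ k * #t :=
  card_le_mul_card_image_of_maps_to (fun _ ha => (mem_filter.1 ha).2) k fun b _ =>
    (card_le_card fun _ ha => by simp_all).trans (hk b)

def gridSquare (c : ℤ × ℤ) (d : ℕ) : Finset (ℤ × ℤ) :=
  Icc (c - ((d : ℤ), (d : ℤ))) (c + ((d : ℤ), (d : ℤ)))

lemma card_gridSquare (c : ℤ × ℤ) (d : ℕ) : #(gridSquare c d) = (2 * d + 1) ^ 2 := by
  have hside : ∀ z : ℤ, (z + d + 1 - (z - d)).toNat = 2 * d + 1 := fun z => by omega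
  simp only [gridSquare, card_Icc_prod, Prod.fst_sub, Prod.snd_sub, Prod.fst_add, Prod.snd_add,
    Int.card_Icc, hside, sq]

lemma boxDist_self (c : ℤ × ℤ) : boxDist c c = 0 := by
  simp [boxDist]

lemma mem_gridSquare_of_boxDist_lt {c₁ c₂ : ℤ × ℤ} {d : ℕ} (h : boxDist c₁ c₂ < d) :
    c₁ ∈ gridSquare c₂ d := by
  have hmax : max |c₁.1 - c₂.1| |c₁.2 - c₂.2| ≤ d := by
    simp only [boxDist] at h
    omega
  simp only [max_le_iff, abs_le] at hmax
  simp only [gridSquare, mem_Icc, Prod.le_def, Prod.fst_sub, Prod.snd_sub, Prod.fst_add,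
    Prod.snd_add]
  omega

lemma card_filter_boxDist_lt_le {x : ℝ} {k : ℕ} {T : Finset Pt}
    (hdens : ∀ ab : ℤ × ℤ, #(T.filter (fun p => gridCoord x p = ab)) ≤ k) (c : ℤ × ℤ) (d : ℕ) :
    #{p ∈ T | boxDist (gridCoord x p) c < d} ≤ k * (2 * d + 1) ^ 2 :=
  calc #{p ∈ T | boxDist (gridCoord x p) c < d}
      ≤ #{p ∈ T | gridCoord x p ∈ gridSquare c d} :=
        card_le_card fun p hp => by
          rw [mem_filter] at hp ⊢
          exact ⟨hp.1, mem_gridSquare_of_boxDist_lt hp.2⟩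
    _ ≤ k * #(gridSquare c d) := card_filter_mem_le_mul_card hdens _
    _ = k * (2 * d + 1) ^ 2 := by rw [card_gridSquare]

theorem IsSSF.exists_isolating {α : Type*} {N c : ℕ} {F : Finset (Finset ℕ)} (hF : IsSSF N c F)
    {S : Finset α} {ℓ : α → ℕ} (hℓ : ∀ p ∈ S, ℓ p ∈ Icc 1 N) (hinj : Set.InjOn ℓ S)
    (hS : #S ≤ c) {u : α} (hu : u ∈ S) :
    ∃ A ∈ F, ℓ u ∈ A ∧ ∀ w ∈ S, w ≠ u → ℓ w ∉ A := by
  obtain ⟨A, hA, hSA⟩ := hF.2 (S.image ℓ) (by simpa [image_subset_iff] using hℓ)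
    ⟨ℓ u, mem_image_of_mem ℓ hu⟩ (card_image_le.trans hS) (ℓ u) (mem_image_of_mem ℓ hu)
  have huA : ℓ u ∈ A := (mem_inter.1 (hSA ▸ mem_singleton_self (ℓ u))).2
  have hlabel : ∀ w ∈ S, ℓ w ∈ A → ℓ w = ℓ u := fun w hw hwA => by
    simpa [hSA] using mem_inter.2 ⟨mem_image_of_mem ℓ hw, hwA⟩
  exact ⟨A, hA, huA, fun w hw hwu hwA => hwu (hinj hw hu (hlabel w hw hwA))⟩

theorem ssf_selects_locally_general
    (x : ℝ) (k d : ℕ) (hd : 0 < d)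
    (T : Finset Pt)
    (hdens : ∀ ab : ℤ × ℤ, (T.filter (fun p => gridCoord x p = ab)).card ≤ k)
    (N : ℕ)
    (ℓ : Pt → ℕ)
    (hℓ : ∀ p ∈ T, ℓ p ∈ Finset.Icc 1 N)
    (hinj : ∀ p ∈ T, ∀ q ∈ T, ℓ p = ℓ q → p = q)
    (c : ℕ) (hc₁ : k * (2 * d + 1) ^ 2 ≤ c)
    (F : Finset (Finset ℕ)) (hF : IsSSF N c F) :
    ∀ u ∈ T, ∃ A ∈ F, ℓ u ∈ A ∧
      ∀ w ∈ T, w ≠ u →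
        boxDist (gridCoord x w) (gridCoord x u) < d → ℓ w ∉ A := by
  intro u hu
  set S := T.filter fun w => boxDist (gridCoord x w) (gridCoord x u) < d
  have huS : u ∈ S := mem_filter.2 ⟨hu, by rwa [boxDist_self]⟩
  have hS : #S ≤ c := (card_filter_boxDist_lt_le hdens _ d).trans hc₁
  have hinjS : Set.InjOn ℓ S := fun p hp q hq => hinj p (mem_filter.1 hp).1 q (mem_filter.1 hq).1
  obtain ⟨A, hA, huA, hsilent⟩ :=
    hF.exists_isolating (fun p hp => hℓ p (mem_filter.1 hp).1) hinjS hS huS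
  exact ⟨A, hA, huA, fun w hw hwu hwd => hsilent w (mem_filter.2 ⟨hw, hwd⟩) hwu⟩

/-- **Selection by an ssf schedule.** If `T` has at most `k` stations per box of `G_x`,
`ℓ : T → {1,…,N}` is an injective labeling and `F` is an `(N,c)`-ssf with
`k·(2d+1)² ≤ c ≤ N`, then for every `u ∈ T` there is a round `A ∈ F` in which `u`
transmits (`ℓ u ∈ A`) while every other station of `T` whose box is at box-distance
strictly less than `d` from the box of `u` (including stations sharing `u`'s box)
is silent (`ℓ w ∉ A`). -/
theorem ssf_selects_locally
    (x : ℝ) (hx : 0 < x) (k d : ℕ) (hk : 0 < k) (hd : 0 < d)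
    (T : Finset Pt)
    (hdens : ∀ ab : ℤ × ℤ, (T.filter (fun p => gridCoord x p = ab)).card ≤ k)
    (N : ℕ) (hN : 0 < N)
    (ℓ : Pt → ℕ)
    (hℓ : ∀ p ∈ T, ℓ p ∈ Finset.Icc 1 N)
    (hinj : ∀ p ∈ T, ∀ q ∈ T, ℓ p = ℓ q → p = q)
    (c : ℕ) (hc₁ : k * (2 * d + 1) ^ 2 ≤ c) (hc₂ : c ≤ N)
    (F : Finset (Finset ℕ)) (hF : IsSSF N c F) :
    ∀ u ∈ T, ∃ A ∈ F, ℓ u ∈ A ∧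
      ∀ w ∈ T, w ≠ u →
        boxDist (gridCoord x w) (gridCoord x u) < d → ℓ w ∉ A :=
  ssf_selects_locally_general x k d hd T hdens N ℓ hℓ hinj c hc₁ F hF
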